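/- For every prime Schröder tree t ∈ PST_n, the sets S_v of sectors seen by the internal vertices v of t are nonempty and pairwise disjoint, their union is {1,…,n}, and the resulting set partition V(t) = {S_v : v internal vertex of t} of {1,…,n} is a noncrossing partition; in particular, the number of blocks of V(t) equals i(t), the number of internal vertices of t. -/

import Mathlib

inductive PTree : Type where
  | node : List PTree → PTree

mutual
  def leavesT : PTree → ℕ
    | .node [] => 1
    | .node (t :: ts) => leavesT t + leavesL ts
  def leavesL : List PTree → ℕ
    | [] => 0
    | t :: ts => leavesT t + leavesL ts
end

mutual
  def inodesT : PTree → ℕ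
    | .node [] => 0
    | .node (t :: ts) => 1 + inodesT t + inodesL ts
  def inodesL : List PTree → ℕ
    | [] => 0
    | t :: ts => inodesT t + inodesL ts
end

inductive Reduced : PTree → Prop where
  | leaf : Reduced (.node [])
  | node : ∀ ts : List PTree, 2 ≤ ts.length → (∀ t ∈ ts, Reduced t) → Reduced (.node ts)

def IsPrimeTree (t : PTree) : Prop :=
  Reduced t ∧ ∃ ts : List PTree, t = .node ts ∧ ts.getLast? = some (.node [])

def PST (n : ℕ) : Set PTree := {t | IsPrimeTree t ∧ leavesT t = n + 1}

def rootSectors : ℕ → List PTree → List ℕ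
  | _, [] => []
  | _, [_] => []
  | o, t :: ts => (o + leavesT t) :: rootSectors (o + leavesT t) ts

mutual
  def sectsT : ℕ → PTree → List (Finset ℕ)
    | _, .node [] => []
    | o, .node (t :: ts) => (rootSectors o (t :: ts)).toFinset :: sectsL o (t :: ts)
  def sectsL : ℕ → List PTree → List (Finset ℕ)
    | _, [] => []
    | o, t :: ts => sectsT o t ++ sectsL (o + leavesT t) ts
end

def IsNoncrossing {n : ℕ} (π : Finpartition (Finset.Icc 1 n)) : Prop :=
  ∀ i j k l : ℕ, i < j → j < k → k < l →
    ∀ B ∈ π.parts, ∀ B' ∈ π.parts, i ∈ B → k ∈ B → j ∈ B' → l ∈ B' → B = B'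

/-!
The root of `.node [t₁, …, tₖ]` sees the sectors lying between consecutive child subtrees, and
every block coming from a child `tᵢ` sits inside the open interval spanned by the leaves of `tᵢ`,
hence strictly between two consecutive root sectors. So blocks from different children are
ordered one after the other and each root sector lies entirely below or entirely above any child
block; no two blocks can meet or cross. The root sectors together with the child intervals tile
the interval of the whole tree, and a node with at least two children sees at least one sector.
-/

theorem leavesT_pos : ∀ t : PTree, 0 < leavesT t
  | .node [] => Nat.one_pos
  | .node (t :: _) => Nat.add_pos_left (leavesT_pos t) _

theorem leavesL_pos : ∀ {ts : List PTree}, ts ≠ [] → 0 < leavesL ts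
  | t :: _, _ => Nat.add_pos_left (leavesT_pos t) _

theorem rootSectors_bounds : ∀ {o : ℕ} {ts : List PTree} {x : ℕ},
    x ∈ rootSectors o ts → o < x ∧ x < o + leavesL ts
  | _, [], _, h => by simp [rootSectors] at h
  | _, [_], _, h => by simp [rootSectors] at h
  | o, t :: u :: ts, x, h => by
    have := leavesT_pos t
    have := leavesL_pos (List.cons_ne_nil u ts)
    have hsplit : leavesL (t :: u :: ts) = leavesT t + leavesL (u :: ts) := rfl
    rcases List.mem_cons.mp h with rfl | h
    · omega
    · have := rootSectors_bounds h
      omega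

theorem rootSectors_cons_cons (o : ℕ) (t u : PTree) (ts : List PTree) :
    rootSectors o (t :: u :: ts) = (o + leavesT t) :: rootSectors (o + leavesT t) (u :: ts) :=
  rfl

theorem mem_rootSectors_cons {o x : ℕ} {t : PTree} {ts : List PTree}
    (h : x ∈ rootSectors o (t :: ts)) :
    x = o + leavesT t ∨ x ∈ rootSectors (o + leavesT t) ts := by
  cases ts with
  | nil => simp [rootSectors] at h
  | cons u ts => exact List.mem_cons.mp h

theorem add_leavesT_le_of_mem_rootSectors_cons {o x : ℕ} {t : PTree} {ts : List PTree}
    (h : x ∈ rootSectors o (t :: ts)) : o + leavesT t ≤ x := by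
  rcases mem_rootSectors_cons h with rfl | h
  · exact le_rfl
  · exact (rootSectors_bounds h).1.le

mutual
theorem sectsT_subset_Ioo : ∀ {o : ℕ} {t : PTree} {S : Finset ℕ},
    S ∈ sectsT o t → S ⊆ Finset.Ioo o (o + leavesT t)
  | _, .node [], _, hS => by simp [sectsT] at hS
  | o, .node (t :: ts), S, hS => by
    rcases List.mem_cons.mp hS with rfl | hS
    · exact fun x hx => Finset.mem_Ioo.mpr (rootSectors_bounds (List.mem_toFinset.mp hx))
    · exact sectsL_subset_Ioo hS
theorem sectsL_subset_Ioo : ∀ {o : ℕ} {ts : List PTree} {S : Finset ℕ},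
    S ∈ sectsL o ts → S ⊆ Finset.Ioo o (o + leavesL ts)
  | _, [], _, hS => by simp [sectsL] at hS
  | o, t :: ts, S, hS => by
    rcases List.mem_append.mp hS with hS | hS
    · exact (sectsT_subset_Ioo hS).trans (Finset.Ioo_subset_Ioo_right (by simp [leavesL]))
    · exact (sectsL_subset_Ioo hS).trans
        (Finset.Ioo_subset_Ioo (by omega) (by simp [leavesL, add_assoc]))
end

theorem forall_lt_or_forall_gt_of_mem_sectsL :
    ∀ {o : ℕ} {ts : List PTree} {S : Finset ℕ} {x : ℕ}, S ∈ sectsL o ts →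
      x ∈ rootSectors o ts → (∀ a ∈ S, x < a) ∨ (∀ a ∈ S, a < x)
  | _, [], _, _, hS, _ => by simp [sectsL] at hS
  | o, t :: ts, S, x, hS, hx => by
    rcases List.mem_append.mp hS with hS | hS
    · have := add_leavesT_le_of_mem_rootSectors_cons hx
      exact .inr fun a ha => by have := Finset.mem_Ioo.mp (sectsT_subset_Ioo hS ha); omega
    · rcases mem_rootSectors_cons hx with rfl | hx
      · exact .inl fun a ha => (Finset.mem_Ioo.mp (sectsL_subset_Ioo hS ha)).1
      · exact forall_lt_or_forall_gt_of_mem_sectsL hS hx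

def Crosses (B B' : Finset ℕ) : Prop :=
  ∃ i ∈ B, ∃ k ∈ B, ∃ j ∈ B', ∃ l ∈ B', i < j ∧ j < k ∧ k < l

def NoncrossingPair (B B' : Finset ℕ) : Prop :=
  Disjoint B B' ∧ ¬Crosses B B' ∧ ¬Crosses B' B

theorem NoncrossingPair.symm {B B' : Finset ℕ} (h : NoncrossingPair B B') :
    NoncrossingPair B' B :=
  ⟨h.1.symm, h.2.2, h.2.1⟩

instance : Std.Symm NoncrossingPair := ⟨fun _ _ => NoncrossingPair.symm⟩

theorem NoncrossingPair.of_forall_lt_or_forall_gt {R S : Finset ℕ}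
    (h : ∀ x ∈ R, (∀ a ∈ S, x < a) ∨ (∀ a ∈ S, a < x)) : NoncrossingPair R S := by
  refine ⟨Finset.disjoint_left.mpr fun x hxR hxS => ?_, ?_, ?_⟩
  · rcases h x hxR with h | h <;> exact lt_irrefl x (h x hxS)
  · rintro ⟨i, -, k, hk, j, hj, l, hl, -, hjk, hkl⟩
    rcases h k hk with h | h
    · exact absurd (h j hj) (by omega)
    · exact absurd (h l hl) (by omega)
  · rintro ⟨i, hi, k, hk, j, hj, l, -, hij, hjk, -⟩
    rcases h j hj with h | h
    · exact absurd (h i hi) (by omega)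
    · exact absurd (h k hk) (by omega)

theorem NoncrossingPair.of_forall_lt {S S' : Finset ℕ} (h : ∀ a ∈ S, ∀ b ∈ S', a < b) :
    NoncrossingPair S S' :=
  of_forall_lt_or_forall_gt fun x hx => .inl (h x hx)

mutual
theorem pairwise_sectsT : ∀ (o : ℕ) (t : PTree), (sectsT o t).Pairwise NoncrossingPair
  | _, .node [] => .nil
  | o, .node (t :: ts) => .cons
    (fun _ hS => .of_forall_lt_or_forall_gt fun _ hx =>
      forall_lt_or_forall_gt_of_mem_sectsL hS (List.mem_toFinset.mp hx))
    (pairwise_sectsL o (t :: ts))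
theorem pairwise_sectsL : ∀ (o : ℕ) (ts : List PTree), (sectsL o ts).Pairwise NoncrossingPair
  | _, [] => .nil
  | o, t :: ts => List.pairwise_append.mpr ⟨pairwise_sectsT o t, pairwise_sectsL _ ts,
      fun _ hS _ hS' => .of_forall_lt fun _ ha _ hb =>
        (Finset.mem_Ioo.mp (sectsT_subset_Ioo hS ha)).2.trans
          (Finset.mem_Ioo.mp (sectsL_subset_Ioo hS' hb)).1⟩
end

mutual
theorem sup_sectsT : ∀ (o : ℕ) (t : PTree),
    (sectsT o t).toFinset.sup id = Finset.Ioo o (o + leavesT t)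
  | o, .node [] => by ext; simp [sectsT, leavesT]
  | o, .node (t :: ts) => by
    rw [sectsT, List.toFinset_cons, Finset.sup_insert, Finset.sup_eq_union, Finset.union_comm]
    exact sup_sectsL o (t :: ts)
theorem sup_sectsL : ∀ (o : ℕ) (ts : List PTree),
    (sectsL o ts).toFinset.sup id ∪ (rootSectors o ts).toFinset = Finset.Ioo o (o + leavesL ts)
  | o, [] => by simp [sectsL, rootSectors, leavesL]
  | o, [t] => by simp [sectsL, rootSectors, leavesL, sup_sectsT o t]
  | o, t :: u :: ts => by
    have := leavesT_pos t
    have := leavesL_pos (List.cons_ne_nil u ts)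
    rw [sectsL, List.toFinset_append, Finset.sup_union, Finset.sup_eq_union, sup_sectsT,
      rootSectors_cons_cons, List.toFinset_cons, Finset.union_insert, Finset.union_assoc,
      sup_sectsL]
    have hsplit : leavesL (t :: u :: ts) = leavesT t + leavesL (u :: ts) := rfl
    ext x
    simp only [Finset.mem_insert, Finset.mem_union, Finset.mem_Ioo]
    omega
end

mutual
theorem length_sectsT : ∀ (o : ℕ) (t : PTree), (sectsT o t).length = inodesT t
  | _, .node [] => rfl
  | o, .node (t :: ts) => by
    rw [sectsT, List.length_cons, length_sectsL, inodesT, inodesL]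
    omega
theorem length_sectsL : ∀ (o : ℕ) (ts : List PTree), (sectsL o ts).length = inodesL ts
  | _, [] => rfl
  | o, t :: ts => by
    rw [sectsL, List.length_append, length_sectsT, length_sectsL, inodesL]
end

mutual
theorem nonempty_of_mem_sectsT : ∀ {o : ℕ} {t : PTree} {S : Finset ℕ},
    Reduced t → S ∈ sectsT o t → S.Nonempty
  | _, .node [], _, _, hS => by simp [sectsT] at hS
  | o, .node (t :: ts), S, .node _ hlen hred, hS => by
    rcases List.mem_cons.mp hS with rfl | hS
    · obtain ⟨u, ts, rfl⟩ : ∃ u us, ts = u :: us :=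
        List.exists_cons_of_length_pos (by simp at hlen; omega)
      exact ⟨o + leavesT t, by simp [rootSectors_cons_cons]⟩
    · exact nonempty_of_mem_sectsL hred hS
theorem nonempty_of_mem_sectsL : ∀ {o : ℕ} {ts : List PTree} {S : Finset ℕ},
    (∀ t ∈ ts, Reduced t) → S ∈ sectsL o ts → S.Nonempty
  | _, [], _, _, hS => by simp [sectsL] at hS
  | _, t :: _, _, hred, hS => by
    rcases List.mem_append.mp hS with hS | hS
    · exact nonempty_of_mem_sectsT (hred t List.mem_cons_self) hS
    · exact nonempty_of_mem_sectsL (fun u hu => hred u (List.mem_cons_of_mem t hu)) hS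
end

theorem List.Pairwise.nodup_of_noncrossingPair {l : List (Finset ℕ)}
    (hl : l.Pairwise NoncrossingPair) (hne : ∀ S ∈ l, S.Nonempty) : l.Nodup :=
  hl.imp_of_mem fun hS _ h hSS' => by
    subst hSS'
    exact (hne _ hS).ne_empty (Finset.disjoint_self_iff_empty _ |>.mp h.1)

theorem exists_noncrossing_finpartition {n : ℕ} {l : List (Finset ℕ)}
    (hl : l.Pairwise NoncrossingPair) (hne : ∀ S ∈ l, S.Nonempty)
    (hsup : l.toFinset.sup id = Finset.Icc 1 n) :
    ∃ π : Finpartition (Finset.Icc 1 n), IsNoncrossing π ∧ π.parts = l.toFinset := by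
  have hpair : ∀ S ∈ l.toFinset, ∀ S' ∈ l.toFinset, S ≠ S' → NoncrossingPair S S' :=
    fun S hS S' hS' => hl.forall (List.mem_toFinset.mp hS) (List.mem_toFinset.mp hS')
  refine ⟨⟨l.toFinset, Finset.supIndep_iff_pairwiseDisjoint.mpr
    fun S hS S' hS' h => (hpair S hS S' hS' h).1, hsup,
    fun h => Finset.not_nonempty_empty (hne ∅ (List.mem_toFinset.mp h))⟩, ?_, rfl⟩
  intro i j k l hij hjk hkl B hB B' hB' hi hk hj hl
  by_contra hBB'
  exact (hpair B hB B' hB' hBB').2.1 ⟨i, hi, k, hk, j, hj, l, hl, hij, hjk, hkl⟩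

/-- for a prime Schröder tree `t` of weight `n`, the sets of sectors
seen by the internal vertices are nonempty, pairwise disjoint, their union is
`{1,…,n}`, they form a noncrossing partition of `{1,…,n}`, and the number of
blocks equals the number of internal vertices of `t`. -/
theorem stmt6 (n : ℕ) (hn : 1 ≤ n) (t : PTree) (ht : t ∈ PST n) :
    (∀ Sv ∈ sectsT 0 t, Sv.Nonempty) ∧
    List.Pairwise Disjoint (sectsT 0 t) ∧
    (sectsT 0 t).foldr (· ∪ ·) ∅ = Finset.Icc 1 n ∧
    (∃ π : Finpartition (Finset.Icc 1 n),
      IsNoncrossing π ∧ π.parts = (sectsT 0 t).toFinset) ∧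
    (sectsT 0 t).toFinset.card = inodesT t := by
  obtain ⟨⟨hred, -⟩, hleaves⟩ := ht
  have hne : ∀ S ∈ sectsT 0 t, S.Nonempty := fun _ => nonempty_of_mem_sectsT hred
  have hpair := pairwise_sectsT 0 t
  have hsup : (sectsT 0 t).toFinset.sup id = Finset.Icc 1 n := by
    rw [sup_sectsT, hleaves]
    ext
    simp only [Finset.mem_Ioo, Finset.mem_Icc]
    omega
  refine ⟨hne, hpair.imp (·.1), ?_, exists_noncrossing_finpartition hpair hne hsup, ?_⟩
  · exact (List.foldr_sup_eq_sup_toFinset _).trans hsup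
  · rw [List.toFinset_card_of_nodup (hpair.nodup_of_noncrossingPair hne), length_sectsT]
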